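/- arXiv:2505.13640 — 8 statements merged into one kernel-verified Lean document; each statement's English description precedes it below -/
import Mathlib

section
/- Let h, w be positive even integers and let W : Fin h × Fin w → Bool be such that every filled cell has at most one filled orthogonal neighbor. Then the number of filled cells of W is at most h·w/2, and this bound is attained by some such W. -/
abbrev cellAdj {h w : ℕ} (p q : Fin h × Fin w) : Prop :=
  (p.1 = q.1 ∧ (p.2.val + 1 = q.2.val ∨ q.2.val + 1 = p.2.val)) ∨
  (p.2 = q.2 ∧ (p.1.val + 1 = q.1.val ∨ q.1.val + 1 = p.1.val))

/-- number of filled orthogonal neighbors of `p` -/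
def degW {h w : ℕ} (W : Fin h × Fin w → Bool) (p : Fin h × Fin w) : ℕ :=
  (Finset.univ.filter (fun q => cellAdj p q ∧ W q = true)).card

/-- every filled cell has at most `d` filled orthogonal neighbors -/
def degLEW {h w : ℕ} (W : Fin h × Fin w → Bool) (d : ℕ) : Prop :=
  ∀ p, W p = true → degW W p ≤ d

/-- number of filled cells -/
def filledCount {h w : ℕ} (W : Fin h × Fin w → Bool) : ℕ :=
  (Finset.univ.filter (fun p => W p = true)).card

/-!
Cut the grid into 2×2 blocks. Among any three cells of a block one is adjacent to the other two,
so a block holds at most two filled cells. Conversely, the brick pattern of horizontal dominoes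
has degree at most one, and reversing the order of the rows exchanges its filled and empty cells,
so exactly half of the cells are filled.
-/

open Finset

lemma two_mul_card_filter_eq_card_of_perm {α : Type*} [Fintype α] (f : α → Bool)
    (e : Equiv.Perm α) (he : ∀ a, f (e a) = !f a) :
    2 * #{a | f a = true} = Fintype.card α := by
  have hswap : #{a | f a = true} = #{a | ¬f a = true} :=
    card_equiv e fun a => by simp [he]
  rw [two_mul, ← card_univ]
  nth_rw 2 [hswap]
  exact card_filter_add_card_filter_not _

section Grid

variable {h w : ℕ}

def block (p : Fin h × Fin w) : ℕ × ℕ := (p.1 / 2, p.2 / 2)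

lemma cellAdj_or_of_block_eq {x y z : Fin h × Fin w} (hxy : x ≠ y) (hxz : x ≠ z) (hyz : y ≠ z)
    (hy : block y = block x) (hz : block z = block x) :
    (cellAdj x y ∧ cellAdj x z) ∨ (cellAdj y x ∧ cellAdj y z) ∨ (cellAdj z x ∧ cellAdj z y) := by
  simp only [block, Prod.ext_iff, Fin.ext_iff, ne_eq] at *
  omega

lemma two_le_degW {W : Fin h × Fin w → Bool} {p q r : Fin h × Fin w} (hqr : q ≠ r)
    (hq : cellAdj p q) (hr : cellAdj p r) (hWq : W q = true) (hWr : W r = true) :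
    2 ≤ degW W p :=
  one_lt_card.2 ⟨q, by simp [hq, hWq], r, by simp [hr, hWr], hqr⟩

lemma card_filled_block_le_two {W : Fin h × Fin w → Bool} (hW : degLEW W 1) (b : ℕ × ℕ) :
    #{p | W p = true ∧ block p = b} ≤ 2 := by
  by_contra! hlt
  obtain ⟨x, hx, y, hy, z, hz, hxy, hxz, hyz⟩ := two_lt_card.1 hlt
  simp only [mem_filter, mem_univ, true_and] at hx hy hz
  have not_adj_both {p q r} (hp : W p = true) (hq : W q = true) (hr : W r = true) (hqr : q ≠ r) :
      ¬(cellAdj p q ∧ cellAdj p r) := fun ⟨hpq, hpr⟩ =>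
    (hW p hp).not_gt (two_le_degW hqr hpq hpr hq hr)
  rcases cellAdj_or_of_block_eq hxy hxz hyz (hy.2.trans hx.2.symm) (hz.2.trans hx.2.symm) with
    hc | hc | hc
  exacts [not_adj_both hx.1 hy.1 hz.1 hyz hc, not_adj_both hy.1 hx.1 hz.1 hxz hc,
    not_adj_both hz.1 hx.1 hy.1 hxy hc]

lemma filledCount_le (hh : Even h) (hw : Even w) {W : Fin h × Fin w → Bool}
    (hW : degLEW W 1) : filledCount W ≤ h * w / 2 := by
  obtain ⟨a, rfl⟩ := hh
  obtain ⟨b, rfl⟩ := hw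
  have hblock : ∀ p ∈ ({p | W p = true} : Finset _), block p ∈ range a ×ˢ range b := by
    intro p _
    simp only [block, mem_product, mem_range]
    omega
  calc filledCount W ≤ 2 * #(range a ×ˢ range b) :=
        card_le_mul_card_image_of_maps_to hblock 2 fun c _ => by
          rw [filter_filter]; exact card_filled_block_le_two hW c
    _ = (a + a) * (b + b) / 2 := by
        rw [card_product, card_range, card_range,
          show (a + a) * (b + b) = 2 * (2 * (a * b)) by ring, Nat.mul_div_cancel_left _ two_pos]

def brickWord (p : Fin h × Fin w) : Bool := decide ((p.2.val + 2 * p.1.val) % 4 < 2)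

lemma degLEW_brickWord : degLEW (brickWord (h := h) (w := w)) 1 := by
  intro p hp
  rw [degW, card_le_one]
  intro q hq r hr
  simp only [mem_filter, mem_univ, true_and, brickWord, decide_eq_true_eq, cellAdj,
    Prod.ext_iff, Fin.ext_iff] at hq hr hp ⊢
  omega

lemma filledCount_brickWord (hh : Even h) :
    filledCount (brickWord (h := h) (w := w)) = h * w / 2 := by
  -- `2 * (h - 1 - i) ≡ 2 * i + 2 [MOD 4]` since `h` is even
  have hswap : ∀ p : Fin h × Fin w,
      brickWord (Equiv.prodCongr Fin.revPerm (Equiv.refl _) p) = !brickWord p := by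
    rintro ⟨i, j⟩
    obtain ⟨a, rfl⟩ := hh
    simp only [brickWord, Equiv.prodCongr_apply, Prod.map, Fin.revPerm_apply, Fin.val_rev,
      Equiv.refl_apply]
    rw [← decide_not, decide_eq_decide]
    omega
  have := two_mul_card_filter_eq_card_of_perm _ _ hswap
  rw [Fintype.card_prod, Fintype.card_fin, Fintype.card_fin] at this
  unfold filledCount
  omega

end Grid

theorem stmt1_general (h w : ℕ)
    (heh : h % 2 = 0) (hew : w % 2 = 0) :
    (∀ W : Fin h × Fin w → Bool, degLEW W 1 → filledCount W ≤ h * w / 2) ∧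
    (∃ W : Fin h × Fin w → Bool, degLEW W 1 ∧ filledCount W = h * w / 2) :=
  ⟨fun _ hW => filledCount_le (Nat.even_iff.2 heh) (Nat.even_iff.2 hew) hW,
    brickWord, degLEW_brickWord, filledCount_brickWord (Nat.even_iff.2 heh)⟩

theorem stmt1 (h w : ℕ) (hh : 0 < h) (hw : 0 < w)
    (heh : h % 2 = 0) (hew : w % 2 = 0) :
    (∀ W : Fin h × Fin w → Bool, degLEW W 1 → filledCount W ≤ h * w / 2) ∧
    (∃ W : Fin h × Fin w → Bool, degLEW W 1 ∧ filledCount W = h * w / 2) :=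
  stmt1_general h w heh hew
end

section
/- Let h be an odd positive integer, w an even positive integer, and W : Fin h × Fin w → Bool such that every filled cell has at most one filled orthogonal neighbor. Then the number of filled cells of W is at most (h-1)·w/2 + ⌈2w/3⌉, and this bound is attained by some such W. -/
/-!
Row `0` contains no three consecutive filled cells (the middle one would have degree two), so at
most `⌈2w/3⌉` of its cells are filled. Since `w` is even, the remaining `h - 1` rows split into
`2 × 2` squares, and a square holds at most two filled cells: any three of its cells form an L
whose corner has two filled neighbours. The bound is attained by filling the columns `j ≢ 2` in
even rows and the columns `j ≡ 2 (mod 3)` in odd rows.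
-/

open Finset

lemma sum_range_two_mul {M : Type*} [AddCommMonoid M] (f : ℕ → M) (m : ℕ) :
    ∑ i ∈ range (2 * m), f i = ∑ k ∈ range m, (f (2 * k) + f (2 * k + 1)) := by
  induction m with
  | zero => simp
  | succ m ih =>
    rw [show 2 * (m + 1) = 2 * m + 1 + 1 by ring, sum_range_succ, sum_range_succ, sum_range_succ,
      ih, add_assoc]

lemma sum_range_le_of_add_add_le_two {u : ℕ → ℕ} (hu : ∀ j, u j ≤ 1)
    (hu₃ : ∀ j, u j + u (j + 1) + u (j + 2) ≤ 2) :
    ∀ n, ∑ j ∈ range n, u j ≤ (2 * n + 2) / 3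
  | 0 => by simp
  | 1 => by simpa using hu 0
  | 2 => by
    have := hu 0
    have := hu 1
    simp only [sum_range_succ, sum_range_zero]
    omega
  | n + 3 => by
    have := sum_range_le_of_add_add_le_two hu hu₃ n
    have := hu₃ n
    rw [sum_range_succ, sum_range_succ, sum_range_succ]
    omega

lemma sum_range_ite_mod_three_eq_two (n : ℕ) :
    ∑ j ∈ range n, (if j % 3 = 2 then 0 else 1) = (2 * n + 2) / 3 := by
  induction n with
  | zero => rfl
  | succ n ih =>
    rw [sum_range_succ, ih]
    split_ifs <;> lia

def gridAdj (p q : ℕ × ℕ) : Prop :=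
  (p.1 = q.1 ∧ (p.2 + 1 = q.2 ∨ q.2 + 1 = p.2)) ∨
  (p.2 = q.2 ∧ (p.1 + 1 = q.1 ∨ q.1 + 1 = p.1))

section Grid

variable {h w : ℕ} (W : Fin h × Fin w → Bool)

-- Extended by zero off the grid, so that row and column sums need no boundary cases.
def cellInd (p : ℕ × ℕ) : ℕ :=
  if hp : p.1 < h ∧ p.2 < w then (W (⟨p.1, hp.1⟩, ⟨p.2, hp.2⟩)).toNat else 0

lemma cellInd_le_one (p : ℕ × ℕ) : cellInd W p ≤ 1 := by
  unfold cellInd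
  split_ifs
  exacts [Bool.toNat_le _, zero_le_one]

lemma exists_of_cellInd_eq_one {p : ℕ × ℕ} (hp : cellInd W p = 1) :
    ∃ c : Fin h × Fin w, W c = true ∧ ((c.1 : ℕ), (c.2 : ℕ)) = p := by
  unfold cellInd at hp
  split_ifs at hp
  exact ⟨_, Bool.toNat_eq_one.mp hp, rfl⟩

lemma filledCount_eq_sum_cellInd :
    filledCount W = ∑ i ∈ range h, ∑ j ∈ range w, cellInd W (i, j) := by
  rw [filledCount, card_filter, Fintype.sum_prod_type, ← Fin.sum_univ_eq_sum_range]
  refine sum_congr rfl fun i _ => ?_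
  rw [← Fin.sum_univ_eq_sum_range]
  refine sum_congr rfl fun j _ => ?_
  simp [cellInd, Bool.toNat]

lemma cellAdj_iff_gridAdj {c d : Fin h × Fin w} :
    cellAdj c d ↔ gridAdj ((c.1 : ℕ), (c.2 : ℕ)) ((d.1 : ℕ), (d.2 : ℕ)) := by
  simp [cellAdj, gridAdj, Fin.ext_iff]

variable {W}

lemma eq_of_cellAdj_of_degLEW_one (hW : degLEW W 1) {p q₁ q₂ : Fin h × Fin w}
    (hp : W p = true) (h₁ : cellAdj p q₁) (h₂ : cellAdj p q₂) (hq₁ : W q₁ = true)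
    (hq₂ : W q₂ = true) : q₁ = q₂ :=
  card_le_one.mp (hW p hp) q₁ (mem_filter.mpr ⟨mem_univ _, h₁, hq₁⟩)
    q₂ (mem_filter.mpr ⟨mem_univ _, h₂, hq₂⟩)

lemma cellInd_add_add_le_two (hW : degLEW W 1) (p q₁ q₂ : ℕ × ℕ) (h₁ : gridAdj p q₁)
    (h₂ : gridAdj p q₂) (hne : q₁ ≠ q₂) :
    cellInd W p + cellInd W q₁ + cellInd W q₂ ≤ 2 := by
  by_contra! hlt
  have := cellInd_le_one W p
  have := cellInd_le_one W q₁
  have := cellInd_le_one W q₂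
  obtain ⟨c, hc, rfl⟩ := exists_of_cellInd_eq_one W (p := p) (by omega)
  obtain ⟨d₁, hd₁, rfl⟩ := exists_of_cellInd_eq_one W (p := q₁) (by omega)
  obtain ⟨d₂, hd₂, rfl⟩ := exists_of_cellInd_eq_one W (p := q₂) (by omega)
  obtain rfl := eq_of_cellAdj_of_degLEW_one hW hc (cellAdj_iff_gridAdj.mpr h₁)
    (cellAdj_iff_gridAdj.mpr h₂) hd₁ hd₂
  exact hne rfl

lemma cellInd_row_three_le (hW : degLEW W 1) (i j : ℕ) :
    cellInd W (i, j) + cellInd W (i, j + 1) + cellInd W (i, j + 2) ≤ 2 := by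
  have := cellInd_add_add_le_two hW (i, j + 1) (i, j) (i, j + 2)
    (by simp [gridAdj]) (by simp [gridAdj]) (by simp)
  omega

lemma cellInd_square_le (hW : degLEW W 1) (i j : ℕ) :
    cellInd W (i, j) + cellInd W (i, j + 1) + cellInd W (i + 1, j) +
      cellInd W (i + 1, j + 1) ≤ 2 := by
  have h₀₀ := cellInd_add_add_le_two hW (i, j) (i, j + 1) (i + 1, j)
    (by simp [gridAdj]) (by simp [gridAdj]) (by simp)
  have h₀₁ := cellInd_add_add_le_two hW (i, j + 1) (i, j) (i + 1, j + 1)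
    (by simp [gridAdj]) (by simp [gridAdj]) (by simp)
  have h₁₀ := cellInd_add_add_le_two hW (i + 1, j) (i, j) (i + 1, j + 1)
    (by simp [gridAdj]) (by simp [gridAdj]) (by simp)
  have h₁₁ := cellInd_add_add_le_two hW (i + 1, j + 1) (i, j + 1) (i + 1, j)
    (by simp [gridAdj]) (by simp [gridAdj]) (by simp)
  omega

end Grid

lemma filledCount_le_of_degLEW_one {m w : ℕ} {W : Fin (2 * m + 1) × Fin w → Bool}
    (hW : degLEW W 1) (hw : Even w) : filledCount W ≤ m * w + (2 * w + 2) / 3 := by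
  obtain ⟨n, rfl⟩ := even_iff_two_dvd.mp hw
  set R : ℕ → ℕ := fun i => ∑ j ∈ range (2 * n), cellInd W (i, j)
  have hrow₀ : R 0 ≤ (2 * (2 * n) + 2) / 3 :=
    sum_range_le_of_add_add_le_two (fun j => cellInd_le_one W _) (cellInd_row_three_le hW 0) _
  have hpair (i : ℕ) : R i + R (i + 1) ≤ 2 * n := by
    simp only [R, ← sum_add_distrib]
    rw [sum_range_two_mul]
    calc _ ≤ ∑ _k ∈ range n, 2 :=
          sum_le_sum fun k _ => by have := cellInd_square_le hW i (2 * k); omega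
      _ = 2 * n := by simp [mul_comm]
  rw [filledCount_eq_sum_cellInd, sum_range_succ', sum_range_two_mul]
  calc _ ≤ ∑ _k ∈ range m, 2 * n + (2 * (2 * n) + 2) / 3 :=
        add_le_add (sum_le_sum fun k _ => hpair (2 * k + 1)) hrow₀
    _ = m * (2 * n) + (2 * (2 * n) + 2) / 3 := by simp

def stripes (h w : ℕ) (p : Fin h × Fin w) : Bool :=
  if (p.1 : ℕ) % 2 = 0 then (p.2 : ℕ) % 3 ≠ 2 else (p.2 : ℕ) % 3 = 2

lemma stripes_eq_true {h w : ℕ} {p : Fin h × Fin w} :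
    stripes h w p = true ↔
      ((p.1 : ℕ) % 2 = 0 ∧ (p.2 : ℕ) % 3 ≠ 2) ∨
        ((p.1 : ℕ) % 2 = 1 ∧ (p.2 : ℕ) % 3 = 2) := by
  unfold stripes
  split_ifs <;> simp only [decide_eq_true_iff] <;> omega

lemma degLEW_stripes (h w : ℕ) : degLEW (stripes h w) 1 := by
  intro p hp
  refine card_le_one.mpr fun a ha b hb => ?_
  simp only [mem_filter, mem_univ, true_and, stripes_eq_true] at ha hb
  rw [stripes_eq_true] at hp
  simp only [cellAdj, Prod.ext_iff, Fin.ext_iff] at ha hb ⊢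
  omega

lemma cellInd_stripes {h w i j : ℕ} (hi : i < h) (hj : j < w) :
    cellInd (stripes h w) (i, j) =
      if i % 2 = 0 then (if j % 3 = 2 then 0 else 1) else (if j % 3 = 2 then 1 else 0) := by
  simp only [cellInd, hi, hj, and_self, dite_true, stripes]
  split_ifs <;> simp_all

lemma filledCount_stripes (m w : ℕ) :
    filledCount (stripes (2 * m + 1) w) = m * w + (2 * w + 2) / 3 := by
  set R : ℕ → ℕ := fun i => ∑ j ∈ range w, cellInd (stripes (2 * m + 1) w) (i, j)
  have hrow₀ : R 0 = (2 * w + 2) / 3 := by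
    rw [← sum_range_ite_mod_three_eq_two]
    exact sum_congr rfl fun j hj => by simp [cellInd_stripes _ (mem_range.mp hj)]
  -- consecutive rows are complementary, so each column of a pair of rows holds one filled cell
  have hpair : ∀ k < m, R (2 * k + 1) + R (2 * k + 1 + 1) = w := fun k hk => by
    simp only [R, ← sum_add_distrib]
    calc _ = ∑ _j ∈ range w, 1 := sum_congr rfl fun j hj => by
          rw [cellInd_stripes (by omega) (mem_range.mp hj),
            cellInd_stripes (by omega) (mem_range.mp hj)]
          split_ifs <;> omega
      _ = w := by simp
  rw [filledCount_eq_sum_cellInd, sum_range_succ', sum_range_two_mul]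
  change ∑ k ∈ range m, (R (2 * k + 1) + R (2 * k + 1 + 1)) + R 0 = _
  rw [sum_congr rfl fun k hk => hpair k (mem_range.mp hk), hrow₀]
  simp

theorem stmt2_general (h w : ℕ)
    (hoh : h % 2 = 1) (hew : w % 2 = 0) :
    (∀ W : Fin h × Fin w → Bool, degLEW W 1 →
      filledCount W ≤ (h - 1) * w / 2 + (2 * w + 2) / 3) ∧
    (∃ W : Fin h × Fin w → Bool, degLEW W 1 ∧
      filledCount W = (h - 1) * w / 2 + (2 * w + 2) / 3) := by
  obtain ⟨m, rfl⟩ : ∃ m, h = 2 * m + 1 := ⟨h / 2, by omega⟩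
  have hmw : (2 * m + 1 - 1) * w / 2 = m * w := by
    rw [Nat.add_sub_cancel, mul_assoc, Nat.mul_div_cancel_left _ two_pos]
  rw [hmw]
  exact ⟨fun W hW => filledCount_le_of_degLEW_one hW (Nat.even_iff.mpr hew),
    stripes _ w, degLEW_stripes _ w, filledCount_stripes m w⟩

theorem stmt2 (h w : ℕ) (hh : 0 < h) (hw : 0 < w)
    (hoh : h % 2 = 1) (hew : w % 2 = 0) :
    (∀ W : Fin h × Fin w → Bool, degLEW W 1 →
      filledCount W ≤ (h - 1) * w / 2 + (2 * w + 2) / 3) ∧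
    (∃ W : Fin h × Fin w → Bool, degLEW W 1 ∧
      filledCount W = (h - 1) * w / 2 + (2 * w + 2) / 3) :=
  stmt2_general h w hoh hew
end

section
/- For all positive integers h and w, there exists a 2-dimensional binary word W : Fin h × Fin w → Bool in which every filled cell has degree at most 3 among filled cells, all boundary cells of the grid are filled, and the number of filled cells is maximal among all words of dimension h × w with maximum degree at most 3. -/
/-!
Take a word `W` with the largest number of filled cells among those of maximum degree at most 3,
and move each of its empty cells to the nearest interior cell. This does not increase the number
of empty cells, and it fills the boundary. Boundary cells have at most three neighbours anyway.
An interior cell `p` of `W` has an empty cell in its closed neighbourhood (otherwise its degree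
is 4), and that empty cell moves either onto itself or onto `p`; so `p` either keeps an empty
neighbour or becomes empty. Grids with fewer than three rows or columns have no interior, and the
full word works.
-/

open Finset

namespace GridWord

variable {h w : ℕ}

def IsInterior (p : Fin h × Fin w) : Prop :=
  0 < p.1.val ∧ p.1.val < h - 1 ∧ 0 < p.2.val ∧ p.2.val < w - 1

/-- A step that would leave the grid stays at `p`. -/
def steps (p : Fin h × Fin w) : Finset (Fin h × Fin w) :=
  {(⟨p.1.val - 1, by omega⟩, p.2), (⟨min (p.1.val + 1) (h - 1), by omega⟩, p.2),
    (p.1, ⟨p.2.val - 1, by omega⟩), (p.1, ⟨min (p.2.val + 1) (w - 1), by omega⟩)}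

lemma mem_steps_of_cellAdj {p q : Fin h × Fin w} (hpq : cellAdj p q) : q ∈ steps p := by
  simp only [steps, mem_insert, mem_singleton, Prod.ext_iff, Fin.ext_iff]
  omega

lemma self_mem_steps {p : Fin h × Fin w} (hp : ¬IsInterior p) : p ∈ steps p := by
  have := p.1.2; have := p.2.2
  simp only [IsInterior, steps, mem_insert, mem_singleton, Prod.ext_iff, Fin.ext_iff, and_true,
    true_and] at hp ⊢
  omega

lemma card_steps {p : Fin h × Fin w} (hp : IsInterior p) : #(steps p) = 4 := by
  unfold IsInterior at hp
  refine card_eq_four.2 ⟨_, _, _, _, ?_, ?_, ?_, ?_, ?_, ?_, rfl⟩ <;>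
    simp only [ne_eq, Prod.ext_iff, Fin.ext_iff] <;> omega

lemma cellAdj_of_mem_steps {p q : Fin h × Fin w} (hp : IsInterior p) (hq : q ∈ steps p) :
    cellAdj p q := by
  simp only [IsInterior, steps, mem_insert, mem_singleton, Prod.ext_iff, Fin.ext_iff] at hp hq
  omega

lemma cellAdj_irrefl (p : Fin h × Fin w) : ¬cellAdj p p := by
  omega

lemma degW_le_three_of_mem_steps {W : Fin h × Fin w → Bool} {p x : Fin h × Fin w}
    (hx : x ∈ steps p) (hxW : ¬(cellAdj p x ∧ W x = true)) : degW W p ≤ 3 := by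
  have hsub : univ.filter (fun q => cellAdj p q ∧ W q = true) ⊆ (steps p).erase x :=
    fun q hq => mem_erase.2 ⟨by rintro rfl; exact hxW (mem_filter.1 hq).2,
      mem_steps_of_cellAdj (mem_filter.1 hq).2.1⟩
  have := card_le_card hsub
  rw [card_erase_of_mem hx] at this
  have : #(steps p) ≤ 4 := card_le_four
  unfold degW
  omega

lemma degW_le_three_of_not_isInterior (W : Fin h × Fin w → Bool) {p : Fin h × Fin w}
    (hp : ¬IsInterior p) : degW W p ≤ 3 :=
  degW_le_three_of_mem_steps (self_mem_steps hp) fun hp => cellAdj_irrefl p hp.1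

lemma degW_le_three_of_cellAdj {W : Fin h × Fin w → Bool} {p q : Fin h × Fin w}
    (hpq : cellAdj p q) (hq : W q = false) : degW W p ≤ 3 :=
  degW_le_three_of_mem_steps (mem_steps_of_cellAdj hpq) (by simp [hq])

lemma four_le_degW {W : Fin h × Fin w → Bool} {p : Fin h × Fin w} (hp : IsInterior p)
    (hW : ∀ q, cellAdj p q → W q = true) : 4 ≤ degW W p := by
  rw [← card_steps hp]
  exact card_le_card fun q hq =>
    mem_filter.2 ⟨mem_univ q, cellAdj_of_mem_steps hp hq, hW q (cellAdj_of_mem_steps hp hq)⟩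

lemma exists_eq_false_of_degLEW {W : Fin h × Fin w → Bool} (hW : degLEW W 3)
    {p : Fin h × Fin w} (hp : IsInterior p) : ∃ q, (q = p ∨ cellAdj p q) ∧ W q = false := by
  by_contra! hfull
  simp only [ne_eq, Bool.not_eq_false] at hfull
  have := four_le_degW hp fun q hq => hfull q (.inr hq)
  have := hW p (hfull p (.inl rfl))
  omega

/-- The nearest interior cell; junk when `h < 3` or `w < 3`, where there is no interior. -/
def clamp (p : Fin h × Fin w) : Fin h × Fin w :=
  (⟨min (max p.1.val 1) (h - 2), by omega⟩, ⟨min (max p.2.val 1) (w - 2), by omega⟩)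

lemma clamp_of_isInterior {p : Fin h × Fin w} (hp : IsInterior p) : clamp p = p := by
  simp only [IsInterior, clamp, Prod.ext_iff, Fin.ext_iff] at hp ⊢
  omega

lemma clamp_eq_or_eq_of_cellAdj {p q : Fin h × Fin w} (hp : IsInterior p) (hpq : cellAdj p q) :
    clamp q = q ∨ clamp q = p := by
  have := q.1.2; have := q.2.2
  simp only [IsInterior, clamp, Prod.ext_iff, Fin.ext_iff] at hp hpq ⊢
  omega

lemma isInterior_clamp (hh : 3 ≤ h) (hw : 3 ≤ w) (p : Fin h × Fin w) :
    IsInterior (clamp p) := by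
  simp only [IsInterior, clamp]
  omega

def emptyCells (W : Fin h × Fin w → Bool) : Finset (Fin h × Fin w) :=
  univ.filter (W · = false)

lemma filledCount_add_card_emptyCells (W : Fin h × Fin w → Bool) :
    filledCount W + #(emptyCells W) = h * w := by
  simpa [filledCount, emptyCells] using card_filter_add_card_filter_not (s := univ) (W · = true)

lemma filledCount_mono {W W' : Fin h × Fin w → Bool} (hWW' : ∀ p, W p = true → W' p = true) :
    filledCount W ≤ filledCount W' :=
  card_le_card fun p hp => by simp_all

def pushIn (W : Fin h × Fin w → Bool) : Fin h × Fin w → Bool :=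
  fun p => decide (p ∉ (emptyCells W).image clamp)

lemma emptyCells_pushIn (W : Fin h × Fin w → Bool) :
    emptyCells (pushIn W) = (emptyCells W).image clamp := by
  ext p
  simp [emptyCells, pushIn]

lemma filledCount_le_filledCount_pushIn (W : Fin h × Fin w → Bool) :
    filledCount W ≤ filledCount (pushIn W) := by
  have := filledCount_add_card_emptyCells W
  have := filledCount_add_card_emptyCells (pushIn W)
  have : #(emptyCells (pushIn W)) ≤ #(emptyCells W) := by
    rw [emptyCells_pushIn]; exact card_image_le
  omega

lemma pushIn_clamp_eq_false {W : Fin h × Fin w → Bool} {q : Fin h × Fin w} (hq : W q = false) :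
    pushIn W (clamp q) = false := by
  simp only [pushIn, decide_eq_false_iff_not, not_not]
  exact mem_image_of_mem clamp (mem_filter.2 ⟨mem_univ q, hq⟩)

lemma pushIn_eq_true_of_not_isInterior (W : Fin h × Fin w → Bool) (hh : 3 ≤ h) (hw : 3 ≤ w)
    {p : Fin h × Fin w} (hp : ¬IsInterior p) : pushIn W p = true := by
  simp only [pushIn, decide_eq_true_eq, mem_image, not_exists, not_and]
  rintro q - rfl
  exact hp (isInterior_clamp hh hw q)

lemma degLEW_pushIn {W : Fin h × Fin w → Bool} (hW : degLEW W 3) : degLEW (pushIn W) 3 := by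
  intro p hp
  by_cases hint : IsInterior p
  · obtain ⟨q, hq, hWq⟩ := exists_eq_false_of_degLEW hW hint
    have hpushed := pushIn_clamp_eq_false hWq
    rcases hq with rfl | hpq
    · simp [clamp_of_isInterior hint, hp] at hpushed
    · rcases clamp_eq_or_eq_of_cellAdj hint hpq with hqq | hqp
      · exact degW_le_three_of_cellAdj hpq (hqq ▸ hpushed)
      · simp [hqp, hp] at hpushed
  · exact degW_le_three_of_not_isInterior _ hint

lemma exists_degLEW_forall_filledCount_le (h w d : ℕ) :
    ∃ W : Fin h × Fin w → Bool, degLEW W d ∧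
      ∀ W' : Fin h × Fin w → Bool, degLEW W' d → filledCount W' ≤ filledCount W := by
  classical
  obtain ⟨W, hW, hmax⟩ :=
    (univ.filter fun W : Fin h × Fin w → Bool => degLEW W d).exists_max_image filledCount
      ⟨fun _ => false, mem_filter.2 ⟨mem_univ _, fun p hp => absurd hp (by simp)⟩⟩
  exact ⟨W, (mem_filter.1 hW).2, fun W' hW' => hmax W' (mem_filter.2 ⟨mem_univ W', hW'⟩)⟩

end GridWord

open GridWord

theorem stmt3_general (h w : ℕ) :
    ∃ W : Fin h × Fin w → Bool,
      degLEW W 3 ∧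
      (∀ p : Fin h × Fin w,
        p.1.val = 0 ∨ p.1.val = h - 1 ∨ p.2.val = 0 ∨ p.2.val = w - 1 →
        W p = true) ∧
      (∀ W' : Fin h × Fin w → Bool, degLEW W' 3 → filledCount W' ≤ filledCount W) := by
  by_cases hsmall : h ≤ 2 ∨ w ≤ 2
  · refine ⟨fun _ => true, fun p _ => degW_le_three_of_not_isInterior _ ?_, fun _ _ => rfl,
      fun W' _ => filledCount_mono fun _ _ => rfl⟩
    unfold IsInterior
    omega
  · obtain ⟨W, hW, hmax⟩ := exists_degLEW_forall_filledCount_le h w 3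
    refine ⟨pushIn W, degLEW_pushIn hW, fun p hp => pushIn_eq_true_of_not_isInterior W
      (by omega) (by omega) (by unfold IsInterior; omega),
      fun W' hW' => (hmax W' hW').trans (filledCount_le_filledCount_pushIn W)⟩

theorem stmt3 (h w : ℕ) (hh : 0 < h) (hw : 0 < w) :
    ∃ W : Fin h × Fin w → Bool,
      degLEW W 3 ∧
      (∀ p : Fin h × Fin w,
        p.1.val = 0 ∨ p.1.val = h - 1 ∨ p.2.val = 0 ∨ p.2.val = w - 1 →
        W p = true) ∧
      (∀ W' : Fin h × Fin w → Bool, degLEW W' 3 → filledCount W' ≤ filledCount W) :=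
  stmt3_general h w
end

section
/- Let h, w ≥ 3 be integers. The maximum number of filled cells in a 2-dimensional binary word W : Fin h × Fin w → Bool in which every filled cell has at most 3 filled orthogonal neighbors equals h·w − γ(G_{h−2,w−2}), where γ(G_{h−2,w−2}) is the domination number of the (h−2) × (w−2) grid graph. -/
/-- domination number of the m × n grid graph -/
noncomputable def gridGamma (m n : ℕ) : ℕ :=
  sInf {k : ℕ | ∃ U : Finset (Fin m × Fin n),
    (∀ v, v ∉ U → ∃ u ∈ U, cellAdj u v) ∧ U.card = k}

/-!
Boundary cells have at most three neighbours, so the degree condition only asks that every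
filled interior cell have an empty neighbour. Hence the complement of the embedded copy of a
dominating set of the interior grid `G_{h-2,w-2}` is admissible. Conversely, clamping the empty
cells of an admissible word into the interior gives a dominating set of `G_{h-2,w-2}`, because a
neighbour of an interior cell clamps to that cell or to one adjacent to it.
-/

variable {h w : ℕ}

lemma cellAdj_comm {p q : Fin h × Fin w} : cellAdj p q ↔ cellAdj q p := by
  unfold cellAdj; grind

/-- The direction from `p` to a neighbour `q`; distinct neighbours have distinct directions,
so a cell has degree at most three as soon as one direction is not taken by a filled neighbour. -/
def neighborDir (p q : Fin h × Fin w) : Bool × Bool :=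
  (decide (p.1 = q.1), decide (p.1.val ≤ q.1.val ∧ p.2.val ≤ q.2.val))

lemma neighborDir_injOn {p q q' : Fin h × Fin w} (hq : cellAdj p q) (hq' : cellAdj p q')
    (he : neighborDir p q = neighborDir p q') : q = q' := by
  simp only [neighborDir, Prod.mk.injEq, decide_eq_decide, Fin.ext_iff] at he
  simp only [cellAdj, Fin.ext_iff] at hq hq'
  ext <;> omega

lemma degW_le_three_of_forall_neighborDir_ne {W : Fin h × Fin w → Bool} {p : Fin h × Fin w}
    (c : Bool × Bool) (hc : ∀ q, cellAdj p q → W q = true → neighborDir p q ≠ c) :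
    degW W p ≤ 3 := by
  have : degW W p ≤ (Finset.univ.erase c).card :=
    Finset.card_le_card_of_injOn (neighborDir p)
      (fun q hq => by simp_all)
      (fun q hq q' hq' he => neighborDir_injOn (by simp_all) (by simp_all) he)
  simpa [Finset.card_erase_of_mem] using this

lemma degW_le_three_of_cellAdj_false {W : Fin h × Fin w → Bool} {p q₀ : Fin h × Fin w}
    (hq₀ : cellAdj p q₀) (hW : W q₀ = false) : degW W p ≤ 3 :=
  degW_le_three_of_forall_neighborDir_ne (neighborDir p q₀) fun q hq hWq he => by
    rw [neighborDir_injOn hq hq₀ he, hW] at hWq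
    exact Bool.false_ne_true hWq

def Fin.shiftInterior {n : ℕ} (i : Fin (n - 2)) : Fin n := ⟨i + 1, by omega⟩

def Fin.clampInterior {n : ℕ} (hn : 3 ≤ n) (i : Fin n) : Fin (n - 2) :=
  ⟨min (max i.val 1) (n - 2) - 1, by omega⟩

lemma Fin.shiftInterior_injective {n : ℕ} : Function.Injective (Fin.shiftInterior (n := n)) :=
  fun i j hij => by simpa [Fin.shiftInterior, Fin.ext_iff] using hij

def interiorEmb : Fin (h - 2) × Fin (w - 2) → Fin h × Fin w :=
  Prod.map Fin.shiftInterior Fin.shiftInterior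

def interiorClamp (hh : 3 ≤ h) (hw : 3 ≤ w) : Fin h × Fin w → Fin (h - 2) × Fin (w - 2) :=
  Prod.map (Fin.clampInterior hh) (Fin.clampInterior hw)

lemma interiorClamp_interiorEmb (hh : 3 ≤ h) (hw : 3 ≤ w) :
    Function.LeftInverse (interiorClamp hh hw) interiorEmb := fun v => by
  ext <;> simp [interiorClamp, interiorEmb, Fin.clampInterior, Fin.shiftInterior]

lemma interiorEmb_injective :
    Function.Injective (interiorEmb : Fin (h - 2) × Fin (w - 2) → Fin h × Fin w) :=
  Fin.shiftInterior_injective.prodMap Fin.shiftInterior_injective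

lemma cellAdj_interiorEmb {u v : Fin (h - 2) × Fin (w - 2)} (huv : cellAdj u v) :
    cellAdj (interiorEmb u) (interiorEmb v) := by
  simp only [cellAdj, interiorEmb, Prod.map, Fin.shiftInterior, Fin.ext_iff] at huv ⊢
  omega

lemma interiorClamp_eq_or_cellAdj (hh : 3 ≤ h) (hw : 3 ≤ w) {v : Fin (h - 2) × Fin (w - 2)}
    {q : Fin h × Fin w} (hq : cellAdj (interiorEmb v) q) :
    interiorClamp hh hw q = v ∨ cellAdj (interiorClamp hh hw q) v := by
  simp only [cellAdj, interiorEmb, interiorClamp, Prod.map, Fin.shiftInterior,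
    Fin.clampInterior, Fin.ext_iff, Prod.ext_iff] at hq ⊢
  omega

lemma degW_le_three_of_notMem_range {W : Fin h × Fin w → Bool} {p : Fin h × Fin w}
    (hp : p ∉ Set.range interiorEmb) : degW W p ≤ 3 := by
  have hb : p.1.val = 0 ∨ p.1.val = h - 1 ∨ p.2.val = 0 ∨ p.2.val = w - 1 := by
    by_contra! hb
    refine hp ⟨(⟨p.1 - 1, by omega⟩, ⟨p.2 - 1, by omega⟩), ?_⟩
    ext <;> simp only [interiorEmb, Prod.map, Fin.shiftInterior] <;> omega
  obtain ⟨c, hc⟩ : ∃ c, ∀ q, cellAdj p q → neighborDir p q ≠ c := by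
    rcases hb with hb | hb | hb | hb <;>
      [use (false, false); use (false, true); use (true, false); use (true, true)] <;>
    · intro q hq
      simp only [neighborDir, cellAdj, Fin.ext_iff] at hq ⊢
      grind
  exact degW_le_three_of_forall_neighborDir_ne c fun q hq _ => hc q hq

lemma exists_cellAdj_neighborDir_eq (v : Fin (h - 2) × Fin (w - 2)) (d : Bool × Bool) :
    ∃ q, cellAdj (interiorEmb v) q ∧ neighborDir (interiorEmb v) q = d := by
  obtain ⟨⟨a, ha⟩, ⟨b, hb⟩⟩ := v
  rcases d with ⟨_ | _, _ | _⟩ <;>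
    [use (⟨a, by omega⟩, ⟨b + 1, by omega⟩); use (⟨a + 2, by omega⟩, ⟨b + 1, by omega⟩);
      use (⟨a + 1, by omega⟩, ⟨b, by omega⟩); use (⟨a + 1, by omega⟩, ⟨b + 2, by omega⟩)] <;>
    simp [cellAdj, neighborDir, interiorEmb, Fin.shiftInterior, Fin.ext_iff]

lemma exists_cellAdj_false_of_degW_le_three {W : Fin h × Fin w → Bool}
    {v : Fin (h - 2) × Fin (w - 2)} (hdeg : degW W (interiorEmb v) ≤ 3) :
    ∃ q, cellAdj (interiorEmb v) q ∧ W q = false := by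
  by_contra! hall
  have : (Finset.univ : Finset (Bool × Bool)).card ≤ degW W (interiorEmb v) :=
    Finset.card_le_card_of_surjOn (neighborDir (interiorEmb v)) fun d _ => by
      obtain ⟨q, hq, rfl⟩ := exists_cellAdj_neighborDir_eq v d
      exact ⟨q, by simpa [hq] using hall q hq, rfl⟩
  simp at this
  omega

def IsGridDominating {m n : ℕ} (U : Finset (Fin m × Fin n)) : Prop :=
  ∀ v, v ∉ U → ∃ u ∈ U, cellAdj u v

lemma gridGamma_le_card {m n : ℕ} {U : Finset (Fin m × Fin n)} (hU : IsGridDominating U) :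
    gridGamma m n ≤ U.card :=
  Nat.sInf_le ⟨U, hU, rfl⟩

lemma exists_isGridDominating_card_eq_gridGamma (m n : ℕ) :
    ∃ U : Finset (Fin m × Fin n), IsGridDominating U ∧ U.card = gridGamma m n :=
  Nat.sInf_mem (s := {k | ∃ U : Finset (Fin m × Fin n), IsGridDominating U ∧ U.card = k})
    ⟨_, Finset.univ, fun v hv => absurd (Finset.mem_univ v) hv, rfl⟩

def emptyCells (W : Fin h × Fin w → Bool) : Finset (Fin h × Fin w) :=
  Finset.univ.filter fun p => W p = false

lemma filledCount_add_card_emptyCells (W : Fin h × Fin w → Bool) :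
    filledCount W + (emptyCells W).card = h * w := by
  simpa [filledCount, emptyCells] using
    Finset.card_filter_add_card_filter_not (s := Finset.univ) (fun p => W p = true)

lemma emptyCells_decide_notMem (D : Finset (Fin h × Fin w)) :
    emptyCells (fun p => decide (p ∉ D)) = D := by
  ext p
  simp [emptyCells]

lemma degLEW_of_isGridDominating {U : Finset (Fin (h - 2) × Fin (w - 2))}
    (hU : IsGridDominating U) : degLEW (fun p => decide (p ∉ U.image interiorEmb)) 3 := by
  intro p hp
  by_cases hpv : p ∈ Set.range interiorEmb
  · obtain ⟨v, rfl⟩ := hpv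
    have hvU : v ∉ U := fun hvU => by simp [Finset.mem_image_of_mem _ hvU] at hp
    obtain ⟨u, huU, huv⟩ := hU v hvU
    exact degW_le_three_of_cellAdj_false (cellAdj_comm.mp (cellAdj_interiorEmb huv))
      (by simp [Finset.mem_image_of_mem _ huU])
  · exact degW_le_three_of_notMem_range hpv

lemma isGridDominating_image_interiorClamp (hh : 3 ≤ h) (hw : 3 ≤ w) {W : Fin h × Fin w → Bool}
    (hW : degLEW W 3) : IsGridDominating ((emptyCells W).image (interiorClamp hh hw)) := by
  intro v hv
  have hWv : W (interiorEmb v) = true := by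
    by_contra hWv
    exact hv (Finset.mem_image.mpr ⟨interiorEmb v, by simpa [emptyCells] using hWv,
      interiorClamp_interiorEmb hh hw v⟩)
  obtain ⟨q, hq, hWq⟩ := exists_cellAdj_false_of_degW_le_three (hW _ hWv)
  have hqE : q ∈ emptyCells W := by simpa [emptyCells] using hWq
  rcases interiorClamp_eq_or_cellAdj hh hw hq with hqv | hqv
  · exact absurd (hqv ▸ Finset.mem_image_of_mem _ hqE) hv
  · exact ⟨_, Finset.mem_image_of_mem _ hqE, hqv⟩

theorem stmt4 (h w : ℕ) (hh : 3 ≤ h) (hw : 3 ≤ w) :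
    IsGreatest {n : ℕ | ∃ W : Fin h × Fin w → Bool, degLEW W 3 ∧ filledCount W = n}
      (h * w - gridGamma (h - 2) (w - 2)) := by
  constructor
  · obtain ⟨U, hU, hUcard⟩ := exists_isGridDominating_card_eq_gridGamma (h - 2) (w - 2)
    refine ⟨_, degLEW_of_isGridDominating hU, ?_⟩
    have hcount := filledCount_add_card_emptyCells (fun p => decide (p ∉ U.image interiorEmb))
    rw [emptyCells_decide_notMem, Finset.card_image_of_injective _ interiorEmb_injective] at hcount
    omega
  · rintro _ ⟨W, hW, rfl⟩
    have hγ := gridGamma_le_card (isGridDominating_image_interiorClamp hh hw hW)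
    have himage := (emptyCells W).card_image_le (f := interiorClamp hh hw)
    have hcount := filledCount_add_card_emptyCells W
    omega
end

section
/- Let h ≥ 3 be an integer and let W : Fin h × Fin 2 → Bool be such that every filled cell has at most 2 filled orthogonal neighbors. Then the number of filled cells of W is at most ⌈3·(2h)/4⌉ (i.e., (3·2h+2)/4 if h is odd and 3·2h/4 if h is even), and this bound is attained. -/
/-! Let `r i ≤ 2` be the number of filled cells in row `i`. A full row between two rows that share
a filled column contains a cell of degree three, so two consecutive full rows are flanked by empty
rows. Peeling rows off the end (three if the last two are full, two otherwise) then gives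
`∑ r i ≤ (3h + 1) / 2` for every `h ≠ 2`. The bound is attained by alternating full rows with
single cells that zigzag between the two columns. -/

open Finset

theorem sum_range_le_of_full_pairs_isolated (r : ℕ → ℕ) (n : ℕ) (hn : n ≠ 2)
    (hle : ∀ i < n, r i ≤ 2)
    (hfwd : ∀ i, i + 2 < n → r i = 2 → r (i + 1) = 2 → r (i + 2) = 0)
    (hbwd : ∀ i, i + 2 < n → r (i + 1) = 2 → r (i + 2) = 2 → r i = 0) :
    ∑ i ∈ range n, r i ≤ (3 * n + 1) / 2 := by
  induction n using Nat.strong_induction_on with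
  | _ n ih =>
  have hsum_le (m : ℕ) (hm : m ≤ n) : ∑ i ∈ range m, r i ≤ 2 * m := by
    simpa [mul_comm] using sum_le_card_nsmul (range m) r 2 fun i hi => hle i (by simp at hi; omega)
  have ih' (m : ℕ) (hm : m < n) (hm2 : m ≠ 2) : ∑ i ∈ range m, r i ≤ (3 * m + 1) / 2 :=
    ih m hm hm2 (fun i hi => hle i (by omega)) (fun i hi => hfwd i (by omega))
      (fun i hi => hbwd i (by omega))
  rcases Nat.lt_or_ge n 3 with hn3 | hn3
  · have := hsum_le n le_rfl
    omega
  obtain ⟨m, rfl⟩ := Nat.exists_eq_add_of_le' hn3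
  have hr1 := hle (m + 1) (by omega)
  have hr2 := hle (m + 2) (by omega)
  rw [sum_range_succ, sum_range_succ]
  -- Either the last three rows hold at most `4` cells, or the last two hold at most `3`.
  by_cases hfull : r (m + 1) = 2 ∧ r (m + 2) = 2
  · have hm : r m = 0 := hbwd m (by omega) hfull.1 hfull.2
    have hbefore : ∑ i ∈ range m, r i ≤ (3 * m + 2) / 2 := by
      by_cases hm2 : m = 2
      · have := hsum_le m (by omega)
        omega
      · have := ih' m (by omega) hm2
        omega
    rw [sum_range_succ]
    omega
  · by_cases hm1 : m = 1
    -- With four rows the first two may be full, but then the third is empty.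
    · subst hm1
      have := hle 0 (by omega)
      have := hle 1 (by omega)
      have := hfwd 0 (by omega)
      norm_num [sum_range_succ] at this hfull hr1 hr2 ⊢
      omega
    · have := ih' (m + 1) (by omega) (by omega)
      omega

section RowFill

variable {h w : ℕ}

def rowFill (W : Fin h × Fin w → Bool) (i : ℕ) : ℕ :=
  if hi : i < h then #{j | W (⟨i, hi⟩, j) = true} else 0

lemma rowFill_val (W : Fin h × Fin w → Bool) (i : Fin h) :
    rowFill W i = #{j | W (i, j) = true} :=
  dif_pos i.isLt

lemma rowFill_le (W : Fin h × Fin w → Bool) (i : ℕ) : rowFill W i ≤ w := by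
  unfold rowFill
  split_ifs
  · exact (card_filter_le _ _).trans_eq (card_fin w)
  · exact Nat.zero_le w

lemma filledCount_eq_sum_rowFill (W : Fin h × Fin w → Bool) :
    filledCount W = ∑ i ∈ range h, rowFill W i := by
  rw [← Fin.sum_univ_eq_sum_range, filledCount, card_filter, Fintype.sum_prod_type]
  simp only [rowFill_val, card_filter]

lemma rowFill_eq_zero_iff (W : Fin h × Fin w → Bool) (i : Fin h) :
    rowFill W i = 0 ↔ ∀ j, W (i, j) = false := by
  simp [rowFill_val]

lemma rowFill_eq_iff (W : Fin h × Fin w → Bool) (i : Fin h) :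
    rowFill W i = w ↔ ∀ j, W (i, j) = true := by
  simpa [rowFill_val] using card_filter_eq_iff (s := univ) (p := fun j => W (i, j) = true)

end RowFill

section Strip

variable {h : ℕ} {W : Fin h × Fin 2 → Bool}

lemma cellAdj_cases {p q : Fin h × Fin 2} (hpq : cellAdj p q) :
    q = (p.1, p.2.rev) ∨ (q.2 = p.2 ∧ q.1.val + 1 = p.1.val) ∨
      (q.2 = p.2 ∧ p.1.val + 1 = q.1.val) := by
  have := p.2.isLt; have := q.2.isLt
  simp only [cellAdj, Prod.ext_iff, Fin.ext_iff, Fin.val_rev] at hpq ⊢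
  omega

lemma two_lt_degW_iff {p : Fin h × Fin 2} :
    2 < degW W p ↔ W (p.1, p.2.rev) = true ∧
      (∃ a : Fin h, a.val + 1 = p.1.val ∧ W (a, p.2) = true) ∧
      ∃ c : Fin h, p.1.val + 1 = c.val ∧ W (c, p.2) = true := by
  constructor
  · intro hp
    obtain ⟨a, ha, b, hb, c, hc, hab, hac, hbc⟩ := two_lt_card.mp hp
    simp only [mem_filter, mem_univ, true_and] at ha hb hc
    -- `p` has at most three neighbours, so `a`, `b`, `c` are all of them.
    rcases cellAdj_cases ha.1 with rfl | ⟨a2, a1⟩ | ⟨a2, a1⟩ <;>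
    rcases cellAdj_cases hb.1 with rfl | ⟨b2, b1⟩ | ⟨b2, b1⟩ <;>
    rcases cellAdj_cases hc.1 with rfl | ⟨c2, c1⟩ | ⟨c2, c1⟩ <;>
    grind
  · rintro ⟨hrev, ⟨a, ha, hWa⟩, c, hc, hWc⟩
    refine two_lt_card.mpr ⟨(p.1, p.2.rev), ?_, (a, p.2), ?_, (c, p.2), ?_, ?_, ?_, ?_⟩ <;>
      simp only [mem_filter, mem_univ, true_and, ne_eq, Prod.ext_iff, Fin.ext_iff,
        Fin.val_rev, cellAdj, hrev, hWa, hWc, and_true] <;>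
      omega

lemma not_degLEW_two_of_full_row {a b c : Fin h} (hab : a.val + 1 = b.val)
    (hbc : b.val + 1 = c.val) (hb : ∀ j, W (b, j) = true) {j : Fin 2} (ha : W (a, j) = true)
    (hc : W (c, j) = true) :
    ¬ degLEW W 2 := fun hW =>
  (hW (b, j) (hb j)).not_gt (two_lt_degW_iff.mpr ⟨hb _, ⟨a, hab, ha⟩, c, hbc, hc⟩)

lemma rowFill_eq_zero_of_full_pair (hW : degLEW W 2) {a b c : Fin h} (hab : a.val + 1 = b.val)
    (hbc : b.val + 1 = c.val) (hb : rowFill W b = 2) :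
    (rowFill W a = 2 → rowFill W c = 0) ∧ (rowFill W c = 2 → rowFill W a = 0) := by
  rw [rowFill_eq_iff] at hb
  simp only [rowFill_eq_iff, rowFill_eq_zero_iff]
  refine ⟨fun ha j => ?_, fun hc j => ?_⟩ <;> by_contra hj <;> rw [Bool.not_eq_false] at hj
  · exact not_degLEW_two_of_full_row hab hbc hb (ha j) hj hW
  · exact not_degLEW_two_of_full_row hab hbc hb hj (hc j) hW

theorem filledCount_le_of_degLEW_two (hW : degLEW W 2) (hh : h ≠ 2) :
    filledCount W ≤ (3 * h + 1) / 2 := by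
  rw [filledCount_eq_sum_rowFill]
  refine sum_range_le_of_full_pairs_isolated _ h hh (fun i _ => rowFill_le W i) ?_ ?_ <;>
    intro i hi
  · intro ha hb
    exact (rowFill_eq_zero_of_full_pair hW (a := ⟨i, by omega⟩) (b := ⟨i + 1, by omega⟩)
      (c := ⟨i + 2, hi⟩) rfl rfl hb).1 ha
  · intro hb hc
    exact (rowFill_eq_zero_of_full_pair hW (a := ⟨i, by omega⟩) (b := ⟨i + 1, by omega⟩)
      (c := ⟨i + 2, hi⟩) rfl rfl hb).2 hc

end Strip

def zigzagWord (h : ℕ) : Fin h × Fin 2 → Bool :=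
  fun p => decide (p.1.val % 2 = 0 ∨ (p.1.val / 2 + p.2.val) % 2 = 0)

lemma degLEW_zigzagWord (h : ℕ) : degLEW (zigzagWord h) 2 := by
  intro p hp
  by_contra! hdeg
  obtain ⟨hrev, ⟨a, ha, hWa⟩, c, hc, hWc⟩ := two_lt_degW_iff.mp hdeg
  simp only [zigzagWord, Fin.val_rev, decide_eq_true_eq] at hp hrev hWa hWc
  have := p.2.isLt
  omega

lemma rowFill_zigzagWord {h i : ℕ} (hi : i < h) : rowFill (zigzagWord h) i = 2 - i % 2 := by
  rw [rowFill_val (zigzagWord h) ⟨i, hi⟩, card_filter, Fin.sum_univ_two]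
  simp only [zigzagWord, Fin.val_zero, Fin.val_one, decide_eq_true_eq]
  split_ifs <;> omega

lemma filledCount_zigzagWord (h : ℕ) : filledCount (zigzagWord h) = 2 * h - h / 2 := by
  rw [filledCount_eq_sum_rowFill, sum_congr rfl fun i hi => rowFill_zigzagWord (mem_range.mp hi)]
  induction h with
  | zero => rfl
  | succ n ih =>
    rw [sum_range_succ, ih]
    omega

theorem stmt6 (h : ℕ) (hh : 3 ≤ h) :
    (∀ W : Fin h × Fin 2 → Bool, degLEW W 2 →
      filledCount W ≤ (if h % 2 = 0 then 3 * (2 * h) / 4 else (3 * (2 * h) + 2) / 4)) ∧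
    (∃ W : Fin h × Fin 2 → Bool, degLEW W 2 ∧
      filledCount W = (if h % 2 = 0 then 3 * (2 * h) / 4 else (3 * (2 * h) + 2) / 4)) := by
  have hbound :
      (if h % 2 = 0 then 3 * (2 * h) / 4 else (3 * (2 * h) + 2) / 4) = (3 * h + 1) / 2 := by
    split_ifs <;> omega
  rw [hbound]
  refine ⟨fun W hW => filledCount_le_of_degLEW_two hW (by omega),
    zigzagWord h, degLEW_zigzagWord h, ?_⟩
  rw [filledCount_zigzagWord]
  omega
end

section
/- Let h ≥ 3 be an integer and let W : Fin h × Fin 3 → Bool be such that every filled cell has at most 2 filled orthogonal neighbors. Then the number of filled cells of W is at most 2h + 2, and this bound is attained by some such W. -/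
/-!
Scan the grid row by row. In the padded grid the degree condition at row `k + 1` only involves
rows `k`, `k + 1`, `k + 2`, and on such triples of rows an exhaustive check shows that the
excess of the first `k` rows over `2 k` is bounded by a potential `excessBound` of rows `k`
and `k + 1` that never exceeds `2`. The bound is attained by the cycle running along the
boundary of the grid.
-/

open Finset

section Padding

variable {h w : ℕ}

/-- The grid `W` shifted by `(1, 1)` inside `ℕ × ℕ` and surrounded by empty cells, so that every
cell of `W` has four orthogonal neighbours. -/
def padded (W : Fin h × Fin w → Bool) : ℕ → ℕ → Bool
  | i + 1, j + 1 => if hij : i < h ∧ j < w then W (⟨i, hij.1⟩, ⟨j, hij.2⟩) else false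
  | _, _ => false

@[simp]
theorem padded_zero_right (W : Fin h × Fin w → Bool) (i : ℕ) : padded W i 0 = false := by
  cases i <;> rfl

theorem padded_succ_succ (W : Fin h × Fin w → Bool) (q : Fin h × Fin w) :
    padded W (q.1 + 1) (q.2 + 1) = W q := by
  simp [padded]

theorem padded_eq_true_iff (W : Fin h × Fin w → Bool) (i j : ℕ) :
    padded W i j = true ↔
      ∃ q : Fin h × Fin w, W q = true ∧ (q.1.val + 1, q.2.val + 1) = (i, j) := by
  constructor
  · intro hW
    match i, j, hW with
    | i + 1, j + 1, hW =>
      simp only [padded] at hW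
      split_ifs at hW with hij
      exact ⟨(⟨i, hij.1⟩, ⟨j, hij.2⟩), hW, rfl⟩
  · rintro ⟨q, hq, hij⟩
    simp only [Prod.mk.injEq] at hij
    rw [← hij.1, ← hij.2, padded_succ_succ, hq]

theorem degW_eq_padded (W : Fin h × Fin w → Bool) (p : Fin h × Fin w) :
    degW W p = (padded W p.1 (p.2 + 1)).toNat + (padded W (p.1 + 2) (p.2 + 1)).toNat +
      (padded W (p.1 + 1) p.2).toNat + (padded W (p.1 + 1) (p.2 + 2)).toNat := by
  obtain ⟨⟨i, hi⟩, ⟨j, hj⟩⟩ := p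
  let shift : Fin h × Fin w ↪ ℕ × ℕ :=
    ⟨fun q => (q.1.val + 1, q.2.val + 1), fun q r hqr => by
      simp only [Prod.mk.injEq, add_left_inj] at hqr
      exact Prod.ext (Fin.ext hqr.1) (Fin.ext hqr.2)⟩
  have hshift : (univ.filter fun q => cellAdj (⟨i, hi⟩, ⟨j, hj⟩) q ∧ W q = true).map shift =
      ({(i, j + 1), (i + 2, j + 1), (i + 1, j), (i + 1, j + 2)} : Finset (ℕ × ℕ)).filter
        fun x => padded W x.1 x.2 = true := by
    ext ⟨a, b⟩
    simp only [mem_map, mem_filter, mem_univ, true_and, mem_insert, mem_singleton,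
      padded_eq_true_iff, shift]
    constructor
    · rintro ⟨q, ⟨hadj, hq⟩, hab⟩
      refine ⟨?_, q, hq, hab⟩
      obtain ⟨rfl, rfl⟩ : q.1.val + 1 = a ∧ q.2.val + 1 = b := Prod.mk.inj hab
      simp only [cellAdj, Fin.ext_iff] at hadj
      simp only [Prod.mk.injEq]
      omega
    · rintro ⟨hab, q, hq, hq'⟩
      refine ⟨q, ⟨?_, hq⟩, hq'⟩
      obtain ⟨rfl, rfl⟩ := hq'
      simp only [cellAdj, Prod.ext_iff, Fin.ext_iff] at hab ⊢
      omega
  rw [degW, ← card_map shift, hshift, card_filter, sum_insert (by simp), sum_insert (by simp),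
    sum_insert (by simp), sum_singleton]
  simp only [Bool.toNat, Bool.cond_eq_ite]
  ring

theorem padded_neighbors_le_two {W : Fin h × Fin w → Bool} (hd : degLEW W 2) {i j : ℕ}
    (hij : padded W (i + 1) (j + 1) = true) :
    (padded W i (j + 1)).toNat + (padded W (i + 2) (j + 1)).toNat +
      (padded W (i + 1) j).toNat + (padded W (i + 1) (j + 2)).toNat ≤ 2 := by
  obtain ⟨q, hq, hqij⟩ := (padded_eq_true_iff W _ _).1 hij
  obtain ⟨rfl, rfl⟩ : q.1.val = i ∧ q.2.val = j := by simpa using hqij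
  rw [← degW_eq_padded]
  exact hd q hq

theorem padded_eq_false_of_width_lt (W : Fin h × Fin w → Bool) (i : ℕ) {j : ℕ} (hj : w < j) :
    padded W i j = false := by
  rw [Bool.eq_false_iff, ne_eq, padded_eq_true_iff]
  rintro ⟨q, -, hq⟩
  simp only [Prod.mk.injEq] at hq
  omega

theorem filledCount_eq_sum_padded (W : Fin h × Fin w → Bool) :
    filledCount W = ∑ i ∈ range h, ∑ j ∈ range w, (padded W (i + 1) (j + 1)).toNat := by
  rw [filledCount, card_filter, Fintype.sum_prod_type,
    ← Fin.sum_univ_eq_sum_range (fun i => ∑ j ∈ range w, (padded W (i + 1) (j + 1)).toNat)]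
  refine sum_congr rfl fun i _ => ?_
  rw [← Fin.sum_univ_eq_sum_range (fun j => (padded W (i + 1) (j + 1)).toNat)]
  refine sum_congr rfl fun j _ => ?_
  rw [padded_succ_succ W (i, j)]
  cases W (i, j) <;> rfl

end Padding

abbrev RowPattern := Bool × Bool × Bool

def rowCount (p : RowPattern) : ℕ := p.1.toNat + p.2.1.toNat + p.2.2.toNat

abbrev MiddleRowDegLETwo (p q r : RowPattern) : Prop :=
  (q.1 = true → p.1.toNat + r.1.toNat + q.2.1.toNat ≤ 2) ∧
  (q.2.1 = true → p.2.1.toNat + r.2.1.toNat + q.1.toNat + q.2.2.toNat ≤ 2) ∧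
  (q.2.2 = true → p.2.2.toNat + r.2.2.toNat + q.2.1.toNat ≤ 2)

def row {h : ℕ} (W : Fin h × Fin 3 → Bool) (i : ℕ) : RowPattern :=
  (padded W i 1, padded W i 2, padded W i 3)

theorem middleRowDegLETwo_row {h : ℕ} {W : Fin h × Fin 3 → Bool} (hd : degLEW W 2) (k : ℕ) :
    MiddleRowDegLETwo (row W k) (row W (k + 1)) (row W (k + 2)) := by
  refine ⟨fun hq => ?_, fun hq => ?_, fun hq => ?_⟩
  · simpa [row] using padded_neighbors_le_two hd (j := 0) hq
  · simpa [row, add_assoc] using padded_neighbors_le_two hd (j := 1) hq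
  · simpa [row, padded_eq_false_of_width_lt W (k + 1) (show 3 < 4 by norm_num)] using
      padded_neighbors_le_two hd (j := 2) hq

theorem filledCount_eq_sum_rowCount {h : ℕ} (W : Fin h × Fin 3 → Bool) :
    filledCount W = ∑ i ∈ range h, rowCount (row W (i + 1)) := by
  simp only [filledCount_eq_sum_padded, sum_range_succ, range_zero, sum_empty, rowCount, row]
  simp

/-- Bounds the excess `∑ i ∈ range k, rowCount (row W (i + 1)) - 2 * k` of the first `k` rows in
terms of rows `k` and `k + 1`. It reaches `2` only when a full row is followed by an empty one,
as when a cycle closes around a block of rows. -/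
def excessBound (p q : RowPattern) : ℕ :=
  (if 2 ≤ rowCount p then 1 else 0) + (if rowCount p = 3 ∧ rowCount q = 0 then 1 else 0)

theorem excessBound_le_two (p q : RowPattern) : excessBound p q ≤ 2 := by
  unfold excessBound
  split_ifs <;> omega

theorem excessBound_step :
    ∀ p q r : RowPattern, MiddleRowDegLETwo p q r →
      excessBound p q + rowCount q ≤ 2 + excessBound q r := by
  decide

theorem sum_rowCount_le {h : ℕ} {W : Fin h × Fin 3 → Bool} (hd : degLEW W 2) (k : ℕ) :
    ∑ i ∈ range k, rowCount (row W (i + 1)) ≤ 2 * k + excessBound (row W k) (row W (k + 1)) := by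
  induction k with
  | zero => simp
  | succ k ih =>
    have step : excessBound (row W k) (row W (k + 1)) + rowCount (row W (k + 1)) ≤
        2 + excessBound (row W (k + 1)) (row W (k + 1 + 1)) :=
      excessBound_step _ _ _ (middleRowDegLETwo_row hd k)
    rw [sum_range_succ]
    omega

theorem filledCount_le_of_degLEW {h : ℕ} {W : Fin h × Fin 3 → Bool} (hd : degLEW W 2) :
    filledCount W ≤ 2 * h + 2 := by
  rw [filledCount_eq_sum_rowCount]
  exact (sum_rowCount_le hd h).trans (by grw [excessBound_le_two])

def boundaryCycle (h : ℕ) : Fin h × Fin 3 → Bool :=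
  fun p => decide (p.2.val ≠ 1 ∨ p.1.val = 0 ∨ p.1.val = h - 1)

theorem padded_boundaryCycle (h i j : ℕ) :
    padded (boundaryCycle h) i j =
      decide (1 ≤ i ∧ i ≤ h ∧ 1 ≤ j ∧ j ≤ 3 ∧ (j ≠ 2 ∨ i = 1 ∨ i = h)) := by
  rw [Bool.eq_iff_iff, padded_eq_true_iff, decide_eq_true_iff]
  constructor
  · rintro ⟨⟨⟨a, ha⟩, ⟨b, hb⟩⟩, hq, hab⟩
    simp only [boundaryCycle, decide_eq_true_eq, Prod.mk.injEq] at hq hab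
    omega
  · rintro ⟨hi, hih, hj, hj3, hrow⟩
    refine ⟨(⟨i - 1, by omega⟩, ⟨j - 1, by omega⟩), ?_, ?_⟩
    · simp only [boundaryCycle, decide_eq_true_eq]
      omega
    · simp only [Prod.mk.injEq]
      omega

theorem degLEW_boundaryCycle {h : ℕ} (hh : 3 ≤ h) : degLEW (boundaryCycle h) 2 := by
  rintro ⟨⟨i, hi⟩, ⟨j, hj⟩⟩ hp
  simp only [boundaryCycle, decide_eq_true_eq] at hp
  simp only [degW_eq_padded, padded_boundaryCycle, Bool.toNat, Bool.cond_decide]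
  split_ifs <;> omega

theorem rowCount_row_boundaryCycle {h i : ℕ} (hi : i < h) :
    rowCount (row (boundaryCycle h) (i + 1)) = if i = 0 ∨ i = h - 1 then 3 else 2 := by
  simp only [rowCount, row, padded_boundaryCycle, Bool.toNat, Bool.cond_decide]
  split_ifs <;> omega

theorem filledCount_boundaryCycle {h : ℕ} (hh : 2 ≤ h) :
    filledCount (boundaryCycle h) = 2 * h + 2 := by
  obtain ⟨m, rfl⟩ : ∃ m, h = m + 2 := ⟨h - 2, by omega⟩
  have inner (i : ℕ) (hi : i ∈ range m) :
      rowCount (row (boundaryCycle (m + 2)) (i + 1 + 1)) = 2 := by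
    have := mem_range.1 hi
    rw [rowCount_row_boundaryCycle (by omega), if_neg (by omega)]
  rw [filledCount_eq_sum_rowCount, sum_range_succ, sum_range_succ', sum_congr rfl inner,
    rowCount_row_boundaryCycle (by omega), rowCount_row_boundaryCycle (by omega),
    if_pos (by omega), if_pos (by omega), sum_const, card_range, smul_eq_mul]
  ring

theorem stmt7 (h : ℕ) (hh : 3 ≤ h) :
    (∀ W : Fin h × Fin 3 → Bool, degLEW W 2 → filledCount W ≤ 2 * h + 2) ∧
    (∃ W : Fin h × Fin 3 → Bool, degLEW W 2 ∧ filledCount W = 2 * h + 2) :=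
  ⟨fun _ hd => filledCount_le_of_degLEW hd,
    ⟨boundaryCycle h, degLEW_boundaryCycle hh, filledCount_boundaryCycle (by omega)⟩⟩
end

section
/- Let h ≥ 5 and let W : Fin h × Fin 5 → Bool have every filled cell with at most 2 filled orthogonal neighbors. If h ≡ 0 (mod 3) then the number of filled cells is at most 10h/3 + 1; if h ≡ 1 (mod 3) then it is at most (10h + 2)/3; if h ≡ 2 (mod 3) then it is at most (10h + 4)/3. Moreover, each of these bounds is attained by some such word. -/
open Finset

theorem List.foldl_max_ite (p : ℕ → Bool) (g : ℕ → ℕ) (l : List ℕ) (m : ℕ) :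
    l.foldl (fun m c => if p c then max m (g c) else m) m =
      max m ((l.map fun c => if p c then g c else 0).foldr max 0) := by
  induction l generalizing m with
  | nil => simp
  | cons c l ih =>
    rw [List.foldl_cons, ih, List.map_cons, List.foldr_cons, ← max_assoc]
    split_ifs <;> simp

theorem Bool.toNat_add_le_two {x y z u : Bool} (hxyz : ¬(x ∧ y ∧ z)) (hxyu : ¬(x ∧ y ∧ u))
    (hxzu : ¬(x ∧ z ∧ u)) (hyzu : ¬(y ∧ z ∧ u)) :
    x.toNat + y.toNat + z.toNat + u.toNat ≤ 2 := by
  revert x y z u; decide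

namespace BinaryWord

variable {h w : ℕ}

def cellAt (W : Fin h × Fin w → Bool) (i j : ℤ) : Bool :=
  if hij : 0 ≤ i ∧ i < h ∧ 0 ≤ j ∧ j < w then W (⟨i.toNat, by omega⟩, ⟨j.toNat, by omega⟩)
  else false

theorem cellAt_coe (W : Fin h × Fin w → Bool) (p : Fin h × Fin w) :
    cellAt W p.1 p.2 = W p := by
  simp [cellAt]

theorem cellAt_eq_true {W : Fin h × Fin w → Bool} {i j : ℤ} :
    cellAt W i j = true ↔
      ∃ p : Fin h × Fin w, ((p.1 : ℤ), (p.2 : ℤ)) = (i, j) ∧ W p = true := by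
  constructor
  · intro hc
    unfold cellAt at hc
    split_ifs at hc with hij
    exact ⟨_, by simp; omega, hc⟩
  · rintro ⟨p, hp, hW⟩
    simp only [Prod.mk.injEq] at hp
    rw [← hp.1, ← hp.2, cellAt_coe, hW]

theorem degW_eq (W : Fin h × Fin w → Bool) (p : Fin h × Fin w) :
    degW W p = (cellAt W ((p.1 : ℤ) - 1) p.2).toNat + (cellAt W ((p.1 : ℤ) + 1) p.2).toNat +
      (cellAt W p.1 ((p.2 : ℤ) - 1)).toNat + (cellAt W p.1 ((p.2 : ℤ) + 1)).toNat := by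
  set i : ℤ := ((p.1 : ℕ) : ℤ)
  set j : ℤ := ((p.2 : ℕ) : ℤ)
  let f : Fin h × Fin w → ℤ × ℤ := fun q => (q.1, q.2)
  have hf : Function.Injective f := fun q q' hq => by
    simp only [f, Prod.mk.injEq, Nat.cast_inj] at hq; exact Prod.ext (Fin.ext hq.1) (Fin.ext hq.2)
  have himage : (univ.filter fun q => cellAdj p q ∧ W q = true).image f =
      ({(i - 1, j), (i + 1, j), (i, j - 1), (i, j + 1)} : Finset (ℤ × ℤ)).filter
        fun z => cellAt W z.1 z.2 := by
    ext ⟨x, y⟩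
    simp only [mem_image, mem_filter, mem_univ, true_and, mem_insert, mem_singleton,
      cellAt_eq_true, f, cellAdj, Prod.mk.injEq, Fin.ext_iff, i, j]
    constructor
    · rintro ⟨q, ⟨hadj, hW⟩, hq⟩
      exact ⟨by omega, q, hq, hW⟩
    · rintro ⟨hxy, q, hq, hW⟩
      exact ⟨q, ⟨by omega, hW⟩, hq⟩
  rw [degW, ← card_image_of_injective _ hf, himage, card_filter, sum_insert (by simp; omega),
    sum_insert (by simp), sum_insert (by simp; omega), sum_singleton]
  simp only [Bool.toNat, cond_eq_ite, add_assoc]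

def rowMask (W : Fin h × Fin w → Bool) (i : ℤ) : ℕ :=
  Nat.ofBits fun j : Fin w => cellAt W i j

theorem testBit_rowMask (W : Fin h × Fin w → Bool) (i : ℤ) (j : ℕ) :
    (rowMask W i).testBit j = cellAt W i j := by
  rw [rowMask, Nat.testBit_ofBits]
  split_ifs with hj
  · rfl
  · simp [cellAt]; omega

theorem rowMask_lt (W : Fin h × Fin w → Bool) (i : ℤ) : rowMask W i < 2 ^ w :=
  Nat.ofBits_lt_two_pow _

theorem rowMask_neg_one (W : Fin h × Fin w → Bool) : rowMask W (-1) = 0 :=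
  Nat.eq_of_testBit_eq fun j => by simp [testBit_rowMask, cellAt]

def neighborCount (a b c j : ℕ) : ℕ :=
  ((b <<< 1).testBit j).toNat + ((b >>> 1).testBit j).toNat + (a.testBit j).toNat +
    (c.testBit j).toNat

theorem degW_eq_neighborCount (W : Fin h × Fin w → Bool) (p : Fin h × Fin w) :
    degW W p = neighborCount (rowMask W ((p.1 : ℕ) - 1)) (rowMask W (p.1 : ℕ))
      (rowMask W ((p.1 : ℕ) + 1)) p.2 := by
  have hleft :
      ((rowMask W (p.1 : ℕ)) <<< 1).testBit p.2 = cellAt W (p.1 : ℕ) ((p.2 : ℤ) - 1) := by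
    rw [Nat.testBit_shiftLeft]
    rcases Nat.eq_zero_or_pos (p.2 : ℕ) with h0 | hpos
    · simp [h0, cellAt]
    · simp [testBit_rowMask, Nat.one_le_iff_ne_zero.mpr hpos.ne', Nat.cast_sub hpos]
  rw [degW_eq, neighborCount, hleft, Nat.testBit_shiftRight, add_comm 1, testBit_rowMask,
    testBit_rowMask, testBit_rowMask]
  push_cast
  omega

/-- The formula marks the cells of `b` whose two horizontal neighbours and one vertical one, or two
vertical neighbours and one horizontal one, are filled; `a` and `c` are the rows above and below. -/
def admissible (a b c : ℕ) : Bool :=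
  b &&& (b <<< 1 &&& b >>> 1 &&& (a ||| c) ||| a &&& c &&& (b <<< 1 ||| b >>> 1)) == 0

theorem admissible_iff (a b c : ℕ) :
    admissible a b c ↔ ∀ j, b.testBit j → neighborCount a b c j ≤ 2 := by
  simp only [admissible, beq_iff_eq, Nat.eq_iff_testBit_eq (m := 0), Nat.zero_testBit,
    Nat.testBit_land, Nat.testBit_lor, neighborCount]
  refine forall_congr' fun j => ?_
  cases (b <<< 1).testBit j <;> cases (b >>> 1).testBit j <;> cases a.testBit j <;>
    cases c.testBit j <;> cases b.testBit j <;> decide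

theorem degLEW_two_iff (W : Fin h × Fin w → Bool) :
    degLEW W 2 ↔
      ∀ i : ℤ, admissible (rowMask W (i - 1)) (rowMask W i) (rowMask W (i + 1)) := by
  constructor
  · intro hW i
    rw [admissible_iff]
    intro j hj
    rw [testBit_rowMask, cellAt_eq_true] at hj
    obtain ⟨p, hp, hWp⟩ := hj
    simp only [Prod.mk.injEq, Nat.cast_inj] at hp
    have := hW p hWp
    rwa [degW_eq_neighborCount, hp.1, hp.2] at this
  · intro hadm p hp
    rw [degW_eq_neighborCount]
    exact (admissible_iff _ _ _).mp (hadm _) _ (by rw [testBit_rowMask, cellAt_coe, hp])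

def rowWeight (w b : ℕ) : ℕ := ∑ j ∈ range w, (b.testBit j).toNat

theorem filledCount_eq_sum_rowWeight (W : Fin h × Fin w → Bool) :
    filledCount W = ∑ i ∈ range h, rowWeight w (rowMask W i) := by
  rw [filledCount, card_filter, Fintype.sum_prod_type,
    ← Fin.sum_univ_eq_sum_range (fun i => rowWeight w (rowMask W i))]
  refine sum_congr rfl fun i _ => ?_
  rw [rowWeight, ← Fin.sum_univ_eq_sum_range (fun j => ((rowMask W i).testBit j).toNat)]
  simp only [testBit_rowMask, Bool.toNat, cond_eq_ite]
  exact sum_congr rfl fun j _ => by rw [cellAt_coe W (i, j)]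

def bellman (w : ℕ) (t : ℕ → ℕ → ℕ) (a b : ℕ) : ℕ :=
  (List.range (2 ^ w)).foldl
    (fun m c => if admissible a b c then max m (rowWeight w b + t b c) else m) 0

theorem bellman_eq_sup (w : ℕ) (t : ℕ → ℕ → ℕ) (a b : ℕ) :
    bellman w t a b =
      (range (2 ^ w)).sup fun c => if admissible a b c then rowWeight w b + t b c else 0 := by
  rw [bellman, List.foldl_max_ite, Nat.zero_max]
  rfl

theorem le_bellman {t : ℕ → ℕ → ℕ} {a b c : ℕ} (hc : c < 2 ^ w)
    (hadm : admissible a b c) :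
    rowWeight w b + t b c ≤ bellman w t a b := by
  rw [bellman_eq_sup]
  exact le_sup_of_le (mem_range.2 hc) (by rw [if_pos hadm])

theorem bellman_le_add {t t' : ℕ → ℕ → ℕ} {a b n : ℕ}
    (ht : ∀ c < 2 ^ w, t' b c ≤ t b c + n) :
    bellman w t' a b ≤ bellman w t a b + n := by
  simp only [bellman_eq_sup]
  refine Finset.sup_le fun c hc => ?_
  split_ifs with hadm
  · have := le_bellman (t := t) (mem_range.1 hc) hadm
    rw [bellman_eq_sup] at this
    linarith [ht c (mem_range.1 hc)]
  · exact Nat.zero_le _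

def tabulate (n : ℕ) (f : ℕ → ℕ → ℕ) : List (List ℕ) :=
  (List.range n).map fun a => (List.range n).map (f a)

def entry (t : List (List ℕ)) (a b : ℕ) : ℕ := (t.getD a []).getD b 0

theorem entry_tabulate {n a b : ℕ} (f : ℕ → ℕ → ℕ) (ha : a < n) (hb : b < n) :
    entry (tabulate n f) a b = f a b := by
  simp [entry, tabulate, ha, hb]

-- The tables memoise the dynamic programme so that the kernel can evaluate it.
def bestTable (w : ℕ) : ℕ → List (List ℕ)
  | 0 => []
  | k + 1 => tabulate (2 ^ w) (bellman w (entry (bestTable w k)))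

/-- The largest weight of `k` rows `b = r₁, …, r_k` of width `w` below a row `a`, each row
admissible between its neighbours. -/
def best (w k a b : ℕ) : ℕ := entry (bestTable w k) a b

theorem best_succ {k a b : ℕ} (ha : a < 2 ^ w) (hb : b < 2 ^ w) :
    best w (k + 1) a b = bellman w (best w k) a b :=
  entry_tabulate _ ha hb

theorem sum_rowWeight_le_best (r : ℕ → ℕ) (hr : ∀ i, r i < 2 ^ w) (k : ℕ)
    (hadm : ∀ i < k, admissible (r i) (r (i + 1)) (r (i + 2))) :
    ∑ i ∈ range k, rowWeight w (r (i + 1)) ≤ best w k (r 0) (r 1) := by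
  induction k generalizing r with
  | zero => simp
  | succ k ih =>
    have htail := ih (fun i => r (i + 1)) (fun i => hr _) fun i hi => hadm (i + 1) (by omega)
    rw [sum_range_succ', best_succ (hr 0) (hr 1)]
    calc ∑ i ∈ range k, rowWeight w (r (i + 1 + 1)) + rowWeight w (r (0 + 1))
        ≤ rowWeight w (r 1) + best w k (r 1) (r 2) := by linarith
      _ ≤ bellman w (best w k) (r 0) (r 1) := le_bellman (hr 2) (hadm 0 (by omega))

theorem filledCount_le_best (W : Fin h × Fin w → Bool) (hW : degLEW W 2) :
    filledCount W ≤ best w h 0 (rowMask W 0) := by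
  have hadm := (degLEW_two_iff W).1 hW
  have key := sum_rowWeight_le_best (fun i : ℕ => rowMask W ((i : ℤ) - 1))
    (fun _ => rowMask_lt _ _) h fun i _ => by convert hadm i using 2 <;> push_cast <;> ring_nf
  simpa [filledCount_eq_sum_rowWeight, rowMask_neg_one] using key

theorem best_add_le {K p n : ℕ}
    (hK : ∀ a < 2 ^ w, ∀ b < 2 ^ w, best w (K + p) a b ≤ best w K a b + n) {k : ℕ} (hk : K ≤ k) :
    ∀ a < 2 ^ w, ∀ b < 2 ^ w, best w (k + p) a b ≤ best w k a b + n := by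
  induction k, hk using Nat.le_induction with
  | base => exact hK
  | succ k _ ih =>
    intro a ha b hb
    rw [show k + 1 + p = k + p + 1 by omega, best_succ ha hb, best_succ ha hb]
    exact bellman_le_add fun c hc => ih b hb c hc

theorem best_five_certificate :
    (∀ a < 2 ^ 5, ∀ b < 2 ^ 5, best 5 6 a b ≤ best 5 3 a b + 10) ∧
      ∀ b < 2 ^ 5, 3 * best 5 4 0 b ≤ 44 ∧ 3 * best 5 5 0 b ≤ 54 ∧ 3 * best 5 6 0 b ≤ 64 := by
  decide +kernel

theorem three_mul_best_five_le {k b : ℕ} (hk : 4 ≤ k) (hb : b < 2 ^ 5) :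
    3 * best 5 k 0 b ≤ 10 * k + 4 := by
  obtain ⟨hperiod, hbase⟩ := best_five_certificate
  induction k using Nat.strong_induction_on with
  | _ k ih =>
    by_cases hk6 : k ≤ 6
    · have := hbase b hb
      interval_cases k <;> omega
    · obtain ⟨m, rfl⟩ : ∃ m, k = m + 3 := ⟨k - 3, by omega⟩
      have hstep := best_add_le (K := 3) (p := 3) hperiod (show 3 ≤ m by omega) 0
        (by norm_num) b hb
      have := ih m (by omega) (by omega)
      omega

theorem three_mul_filledCount_le (W : Fin h × Fin 5 → Bool) (hh : 4 ≤ h) (hW : degLEW W 2) :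
    3 * filledCount W ≤ 10 * h + 4 :=
  (Nat.mul_le_mul_left 3 (filledCount_le_best W hW)).trans
    (three_mul_best_five_le hh (rowMask_lt W 0))

def stripes (h : ℕ) : Fin h × Fin 5 → Bool := fun p =>
  (p.1 + p.2 : ℕ) % 3 ≠ 1 ∨ (p.1 : ℕ) = 0 ∧ (p.2 : ℕ) = 4 ∨ (p.1 : ℕ) + 1 = h ∧ (p.2 : ℕ) = 0

theorem cellAt_stripes (i j : ℤ) :
    cellAt (stripes h) i j = decide (0 ≤ i ∧ i < h ∧ 0 ≤ j ∧ j < 5 ∧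
      ((i + j) % 3 ≠ 1 ∨ i = 0 ∧ j = 4 ∨ i + 1 = h ∧ j = 0)) := by
  unfold cellAt stripes
  split_ifs with hij
  · simp only [decide_eq_decide]
    omega
  · simp only [false_eq_decide_iff]
    omega

theorem degLEW_stripes (h : ℕ) : degLEW (stripes h) 2 := by
  intro p hp
  have hc := cellAt_stripes (h := h) (p.1 : ℕ) (p.2 : ℕ)
  rw [cellAt_coe, hp, eq_comm, decide_eq_true_eq] at hc
  rw [degW_eq]
  apply Bool.toNat_add_le_two <;> simp only [cellAt_stripes, decide_eq_true_eq] <;> omega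

theorem sum_row_stripes (i : Fin h) :
    ∑ j : Fin 5, (if stripes h (i, j) = true then 1 else 0) =
      3 + (if (i : ℕ) % 3 = 2 then 1 else 0) + (if (i : ℕ) = 0 then 1 else 0) +
        (if (i : ℕ) + 1 = h ∧ (i : ℕ) % 3 = 1 then 1 else 0) := by
  simp only [Fin.sum_univ_five, stripes, decide_eq_true_eq, Fin.val_zero, Fin.val_one, Fin.val_two]
  norm_num
  split_ifs <;> omega

theorem filledCount_stripes (hh : 0 < h) :
    filledCount (stripes h) = 3 * h + h / 3 + 1 + (if h % 3 = 2 then 1 else 0) := by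
  have hsum (m : ℕ) :
      ∑ i ∈ range m, (3 + (if i % 3 = 2 then 1 else 0) + (if i = 0 then 1 else 0)) =
        3 * m + m / 3 + min m 1 := by
    induction m with
    | zero => simp
    | succ m ih =>
      rw [sum_range_succ, ih]
      split_ifs <;> omega
  rw [filledCount, card_filter, Fintype.sum_prod_type]
  simp only [sum_row_stripes]
  rw [Fin.sum_univ_eq_sum_range (fun i => 3 + (if i % 3 = 2 then 1 else 0) +
    (if i = 0 then 1 else 0) + (if i + 1 = h ∧ i % 3 = 1 then 1 else 0))]
  obtain ⟨m, rfl⟩ : ∃ m, h = m + 1 := ⟨h - 1, by omega⟩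
  rw [sum_range_succ, sum_congr rfl fun i hi => by
    rw [if_neg (show ¬(i + 1 = m + 1 ∧ i % 3 = 1) by simp at hi; omega), add_zero],
    hsum]
  split_ifs <;> omega

end BinaryWord

theorem stmt14 (h : ℕ) (hh : 5 ≤ h) :
    (∀ W : Fin h × Fin 5 → Bool, degLEW W 2 →
      filledCount W ≤
        (if h % 3 = 0 then 10 * h / 3 + 1
         else if h % 3 = 1 then (10 * h + 2) / 3
         else (10 * h + 4) / 3)) ∧
    (∃ W : Fin h × Fin 5 → Bool, degLEW W 2 ∧
      filledCount W =
        (if h % 3 = 0 then 10 * h / 3 + 1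
         else if h % 3 = 1 then (10 * h + 2) / 3
         else (10 * h + 4) / 3)) := by
  refine ⟨fun W hW => ?_, BinaryWord.stripes h, BinaryWord.degLEW_stripes h, ?_⟩
  · have := BinaryWord.three_mul_filledCount_le W (by omega) hW
    split_ifs <;> omega
  · rw [BinaryWord.filledCount_stripes (by omega)]
    split_ifs <;> omega
end

section
/- Let h, w ≥ 7 be integers. Then there exists a 2-dimensional binary word W : Fin h × Fin w → Bool with every filled cell having at most 2 filled orthogonal neighbors and number of filled cells at least 2hw/3 + 2 if h ≡ w ≡ 0 (mod 3); at least 2hw/3 + 4/3 if h ≡ w (mod 3) and h not ≡ 0 (mod 3); at least 2hw/3 + 1 if exactly one of h, w is ≡ 0 (mod 3); and at least 2hw/3 + 2/3 otherwise. (In each case the stated quantity is an integer.) -/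
/-!
Leave empty every third antidiagonal, the cells with `i + j ≡ h - 1 (mod 3)`. A filled cell then
has filled neighbours on one side only (the next antidiagonal or the previous one), hence at most
two, and exactly `⌊2hw/3⌋` cells are filled, since adding three rows (columns) adds `2w` (`2h`)
filled cells. The corner `(h - 1, 0)` lies on an empty antidiagonal, and so does `(0, w - 1)` when
`h ≡ w (mod 3)`; both can be filled, because their two neighbours are boundary cells that had
only one filled neighbour.
-/

open Finset

-- `h + 2` rather than `h - 1`: the residue must stay 3-periodic in `h` down to `h = 0`.
def IsStripeCell (h w : ℕ) (p : ℕ × ℕ) : Prop :=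
  (p.1 + p.2) % 3 ≠ (h + 2) % 3 ∨ p = (h - 1, 0) ∨ (h % 3 = w % 3 ∧ p = (0, w - 1))

instance (h w : ℕ) (p : ℕ × ℕ) : Decidable (IsStripeCell h w p) := by
  unfold IsStripeCell; infer_instance

def stripeWord (h w : ℕ) (p : Fin h × Fin w) : Bool :=
  decide (IsStripeCell h w (Prod.map Fin.val Fin.val p))

def GridAdj (p q : ℕ × ℕ) : Prop :=
  (p.1 = q.1 ∧ (p.2 + 1 = q.2 ∨ q.2 + 1 = p.2)) ∨
  (p.2 = q.2 ∧ (p.1 + 1 = q.1 ∨ q.1 + 1 = p.1))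

theorem gridAdj_of_cellAdj {h w : ℕ} {p q : Fin h × Fin w} (hpq : cellAdj p q) :
    GridAdj (Prod.map Fin.val Fin.val p) (Prod.map Fin.val Fin.val q) := by
  unfold cellAdj at hpq
  simpa [GridAdj, Fin.ext_iff] using hpq

theorem degW_le_two_of_forall_eq_or_eq {h w : ℕ} {W : Fin h × Fin w → Bool}
    {p : Fin h × Fin w} (a b : ℕ × ℕ)
    (hab : ∀ q, cellAdj p q → W q = true →
      Prod.map Fin.val Fin.val q = a ∨ Prod.map Fin.val Fin.val q = b) :
    degW W p ≤ 2 :=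
  (card_le_card_of_injOn (t := {a, b}) _
    (fun q hq => by simpa using hab q (mem_filter.1 hq).2.1 (mem_filter.1 hq).2.2)
    (Fin.val_injective.prodMap Fin.val_injective).injOn).trans card_le_two

theorem exists_pair_forall_adj_isStripeCell {h w : ℕ} {p : ℕ × ℕ} (hh : 3 ≤ h)
    (hp₁ : p.1 < h) (hp₂ : p.2 < w) (hp : IsStripeCell h w p) :
    ∃ a b : ℕ × ℕ, ∀ q : ℕ × ℕ, q.1 < h → q.2 < w → GridAdj p q → IsStripeCell h w q →
      q = a ∨ q = b := by
  obtain ⟨i, j⟩ := p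
  simp only [IsStripeCell, GridAdj, Prod.ext_iff, Prod.forall] at hp hp₁ hp₂ ⊢
  rcases (by omega : (i + j) % 3 = (h + 2) % 3 ∨ (i + j) % 3 = h % 3 ∨
      (i + j) % 3 = (h + 1) % 3) with hc | hc | hc
  · rcases (by omega : i = h - 1 ∧ j = 0 ∨ i = 0 ∧ j = w - 1) with hcorner | hcorner
    · exact ⟨(h - 2, 0), (h - 1, 1), by omega⟩
    · exact ⟨(1, w - 1), (0, w - 2), by omega⟩
  · by_cases hnear : i = h - 1 ∧ j = 1
    · exact ⟨(h - 1, 0), (h - 1, 2), by omega⟩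
    by_cases hnear' : i = 1 ∧ j = w - 1
    · exact ⟨(0, w - 1), (2, w - 1), by omega⟩
    exact ⟨(i + 1, j), (i, j + 1), by omega⟩
  · by_cases hnear : i = h - 2 ∧ j = 0
    · exact ⟨(h - 3, 0), (h - 1, 0), by omega⟩
    by_cases hnear' : i = 0 ∧ j = w - 2
    · exact ⟨(0, w - 3), (0, w - 1), by omega⟩
    exact ⟨(i - 1, j), (i, j - 1), by omega⟩

theorem degLEW_stripeWord {h w : ℕ} (hh : 3 ≤ h) : degLEW (stripeWord h w) 2 := by
  intro p hp
  obtain ⟨a, b, hab⟩ := exists_pair_forall_adj_isStripeCell hh p.1.isLt p.2.isLt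
    (of_decide_eq_true hp)
  exact degW_le_two_of_forall_eq_or_eq a b fun q hpq hq =>
    hab _ q.1.isLt q.2.isLt (gridAdj_of_cellAdj hpq) (of_decide_eq_true hq)

def stripeCount (h w c : ℕ) : ℕ :=
  ∑ i ∈ range h, ∑ j ∈ range w, if (i + j) % 3 = c then 0 else 1

theorem stripeCount_comm (h w c : ℕ) : stripeCount h w c = stripeCount w h c := by
  simp only [stripeCount, sum_comm (s := range h), add_comm]

theorem stripeCount_add_three_right (h w : ℕ) {c : ℕ} (hc : c < 3) :
    stripeCount h (w + 3) c = stripeCount h w c + 2 * h := by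
  have row : ∀ i, ∑ j ∈ range (w + 3), (if (i + j) % 3 = c then 0 else 1) =
      ∑ j ∈ range w, (if (i + j) % 3 = c then 0 else 1) + 2 := by
    intro i
    simp only [sum_range_succ]
    split_ifs <;> omega
  simp only [stripeCount, row, sum_add_distrib, sum_const, card_range, smul_eq_mul, mul_comm]

theorem stripeCount_eq_two_mul_mul_div_three :
    ∀ h w : ℕ, stripeCount h w ((h + 2) % 3) = 2 * h * w / 3
  | 0, _ => by simp [stripeCount]
  | _, 0 => by simp [stripeCount]
  | 1, 1 | 1, 2 | 2, 1 | 2, 2 => by decide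
  | h + 3, w => by
    rw [show (h + 3 + 2) % 3 = (h + 2) % 3 by omega, stripeCount_comm,
      stripeCount_add_three_right _ _ (by omega), stripeCount_comm,
      stripeCount_eq_two_mul_mul_div_three h w,
      show 2 * (h + 3) * w = 2 * h * w + 3 * (2 * w) by ring, Nat.add_mul_div_left _ _ three_pos]
  | h, w + 3 => by
    rw [stripeCount_add_three_right _ _ (by omega), stripeCount_eq_two_mul_mul_div_three h w,
      show 2 * h * (w + 3) = 2 * h * w + 3 * (2 * h) by ring, Nat.add_mul_div_left _ _ three_pos]

theorem sum_fin_prod_eq_sum_range_product {M : Type*} [AddCommMonoid M] (h w : ℕ)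
    (f : ℕ × ℕ → M) :
    ∑ p : Fin h × Fin w, f (Prod.map Fin.val Fin.val p) = ∑ p ∈ range h ×ˢ range w, f p := by
  rw [Fintype.sum_prod_type, sum_product, ← Fin.sum_univ_eq_sum_range]
  exact sum_congr rfl fun i _ => Fin.sum_univ_eq_sum_range (fun j => f (i, j)) w

theorem filledCount_stripeWord {h w : ℕ} (hh : 2 ≤ h) (hw : 0 < w) :
    filledCount (stripeWord h w) = 2 * h * w / 3 + 1 + if h % 3 = w % 3 then 1 else 0 := by
  have split : ∀ p ∈ range h ×ˢ range w, (if IsStripeCell h w p then 1 else 0) =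
      (if (p.1 + p.2) % 3 = (h + 2) % 3 then 0 else 1) + (if p = (h - 1, 0) then 1 else 0) +
        if h % 3 = w % 3 then (if p = (0, w - 1) then 1 else 0) else 0 := by
    rintro ⟨i, j⟩ hp
    simp only [mem_product, mem_range] at hp
    simp only [IsStripeCell, Prod.mk.injEq]
    split_ifs <;> omega
  calc filledCount (stripeWord h w)
      = ∑ p ∈ range h ×ˢ range w, if IsStripeCell h w p then 1 else 0 := by
        rw [filledCount, card_filter, ← sum_fin_prod_eq_sum_range_product]
        simp [stripeWord]
    _ = stripeCount h w ((h + 2) % 3) + 1 + if h % 3 = w % 3 then 1 else 0 := by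
        rw [sum_congr rfl split, sum_add_distrib, sum_add_distrib, sum_product, sum_ite_eq']
        by_cases hhw : h % 3 = w % 3 <;> simp [hhw, stripeCount, hw, show 0 < h by omega]
    _ = 2 * h * w / 3 + 1 + if h % 3 = w % 3 then 1 else 0 := by
        rw [stripeCount_eq_two_mul_mul_div_three]

theorem stmt17 (h w : ℕ) (hh : 7 ≤ h) (hw : 7 ≤ w) :
    ∃ W : Fin h × Fin w → Bool, degLEW W 2 ∧
      (h % 3 = 0 ∧ w % 3 = 0 → 2 * h * w / 3 + 2 ≤ filledCount W) ∧
      (h % 3 = w % 3 ∧ h % 3 ≠ 0 → (2 * h * w + 4) / 3 ≤ filledCount W) ∧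
      ((h % 3 = 0 ∧ w % 3 ≠ 0) ∨ (h % 3 ≠ 0 ∧ w % 3 = 0) →
        2 * h * w / 3 + 1 ≤ filledCount W) ∧
      (h % 3 ≠ w % 3 ∧ h % 3 ≠ 0 ∧ w % 3 ≠ 0 → (2 * h * w + 2) / 3 ≤ filledCount W) := by
  refine ⟨stripeWord h w, degLEW_stripeWord (by omega), ?_⟩
  rw [filledCount_stripeWord (by omega) (by omega)]
  generalize 2 * h * w = n
  split_ifs <;> omega
end
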